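/- arXiv:2309.15690 — 3 statements merged into one kernel-verified Lean document; each statement's English description precedes it below -/
import Mathlib

section
/- Let γ ∈ [-3,1] and let f be a classical solution of the Landau equation on an open set D ⊆ ℝ × ℝ³ × ℝ³. Fix t₀ ∈ ℝ, x₀ ∈ ℝ³, v₀ ∈ ℝ³, and r > 0. Then the Galilean-shifted rescaling f_r(t,x,v) = r^{5+γ} f(t₀ + r² t, x₀ + r³ x + r² t v₀, v₀ + r v) is a classical solution of the Landau equation on the set {(t,x,v) : (t₀ + r² t, x₀ + r³ x + r² t v₀, v₀ + r v) ∈ D}. -/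
open MeasureTheory Real
open scoped ENNReal NNReal

noncomputable section

/-- Velocity/position space `ℝ³` with the Euclidean structure. -/
abbrev E3 : Type := EuclideanSpace ℝ (Fin 3)

/-- Partial derivative of `g : E3 → ℝ` in the `i`-th coordinate direction. -/
def pd (g : E3 → ℝ) (i : Fin 3) (v : E3) : ℝ :=
  fderiv ℝ g v (EuclideanSpace.single i 1)

/-- Divergence of a vector field on `E3`. -/
def divV (F : E3 → Fin 3 → ℝ) (v : E3) : ℝ :=
  ∑ i, pd (fun u => F u i) i v

/-- Entries of the projection matrix `Π(w) = I - w ⊗ w / |w|²`. -/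
def projMat (w : E3) (i j : Fin 3) : ℝ :=
  (if i = j then (1 : ℝ) else 0) - w i * w j / ‖w‖ ^ 2

/-- Landau diffusion matrix `ā^f(v)`, entry `(i,j)`. -/
def aBar (γ aγ : ℝ) (g : E3 → ℝ) (v : E3) (i j : Fin 3) : ℝ :=
  aγ * ∫ w : E3, ‖w‖ ^ (γ + 2) * projMat w i j * g (v - w)

/-- Landau drift coefficient `b̄^f(v)`, component `i`. -/
def bBar (γ bγ : ℝ) (g : E3 → ℝ) (v : E3) (i : Fin 3) : ℝ :=
  bγ * ∫ w : E3, ‖w‖ ^ γ * w i * g (v - w)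

/-- Landau zeroth-order coefficient `c̄^f(v)` (equal to `f` itself when `γ = -3`). -/
def cBar (γ cγ : ℝ) (g : E3 → ℝ) (v : E3) : ℝ :=
  if γ = -3 then g v else cγ * ∫ w : E3, ‖w‖ ^ γ * g (v - w)

/-- Transport derivative `∂_t g + v · ∇_x g`. -/
def transportD (g : ℝ → E3 → E3 → ℝ) (t : ℝ) (x v : E3) : ℝ :=
  deriv (fun s => g s x v) t + ∑ i, v i * pd (fun y => g t y v) i x

/-- Right-hand side `∇_v·(ā^g ∇_v g) + b̄^g·∇_v g + c̄^g g` of the Landau equation,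
for `g = f(t,x,·)`. -/
def landauRHS (γ aγ bγ cγ : ℝ) (g : E3 → ℝ) (v : E3) : ℝ :=
  divV (fun u i => ∑ j, aBar γ aγ g u i j * pd g j u) v
    + (∑ i, bBar γ bγ g v i * pd g i v) + cBar γ cγ g v * g v

/-- `f` is a classical solution of the Landau equation on `D ⊆ ℝ_t × ℝ³_x × ℝ³_v`:
nonnegative, C¹ in `(t,x)`, C² in `v`, satisfying the equation pointwise on `D`. -/
structure IsLandauSolution (γ aγ bγ cγ : ℝ) (D : Set (ℝ × E3 × E3))
    (f : ℝ → E3 → E3 → ℝ) : Prop where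
  nonneg : ∀ t x v, (t, x, v) ∈ D → 0 ≤ f t x v
  c1_tx : ∀ t x v, (t, x, v) ∈ D → ContDiffAt ℝ 1 (fun p : ℝ × E3 => f p.1 p.2 v) (t, x)
  c2_v : ∀ t x v, (t, x, v) ∈ D → ContDiffAt ℝ 2 (fun u => f t x u) v
  eqn : ∀ t x v, (t, x, v) ∈ D →
    transportD f t x v = landauRHS γ aγ bγ cγ (f t x) v

/-- The kinetic cylinder `Q_r(t₀,x₀,v₀)`. -/
def Qcyl (r t₀ : ℝ) (x₀ v₀ : E3) : Set (ℝ × E3 × E3) :=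
  {z | t₀ - r ^ 2 < z.1 ∧ z.1 ≤ t₀ ∧
    ‖z.2.1 - x₀ - (z.1 - t₀) • v₀‖ < r ^ 3 ∧ ‖z.2.2 - v₀‖ < r}

/-!
The Galilean rescaling `(t, x, v) ↦ (t₀ + r²t, x₀ + r³x + r²t v₀, v₀ + rv)` maps the free-transport
characteristic `s ↦ (t + s, x + s v, v)` onto the characteristic through the image point, run at
speed `r²`: the shift by `r²t v₀` is exactly what makes the velocity `v₀ + rv` appear. Hence the
transport side of `K f(…)` is `K r²` times that of `f`.

On the collision side the kernels `|w|^{γ+2} Π(w)`, `|w|^γ w`, `|w|^γ` are homogeneous of degrees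
`γ + 2`, `γ + 1`, `γ`, so the substitution `w ↦ r w` in the convolutions, together with the chain
rule for the `v`-derivatives, shows that the quadratic right-hand side of `v ↦ K g(v₀ + r v)` is
`K² r^{-γ-3}` times that of `g`. The two factors agree precisely for `K = r^{5+γ}`.
-/

theorem norm_smul_rpow {E : Type*} [SeminormedAddCommGroup E] [NormedSpace ℝ E] {r : ℝ}
    (hr : 0 ≤ r) (w : E) (e : ℝ) : ‖r • w‖ ^ e = r ^ e * ‖w‖ ^ e := by
  rw [norm_smul, Real.norm_of_nonneg hr, Real.mul_rpow hr (norm_nonneg w)]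

theorem EuclideanSpace.sum_smul_single_one {ι : Type*} [Fintype ι] [DecidableEq ι]
    (v : EuclideanSpace ℝ ι) : ∑ i, v i • EuclideanSpace.single i (1 : ℝ) = v := by
  simpa using (EuclideanSpace.basisFun ι ℝ).sum_repr v

theorem integral_homogeneous_mul_comp_affine {E : Type*} [NormedAddCommGroup E]
    [NormedSpace ℝ E] [MeasurableSpace E] [BorelSpace E] [FiniteDimensional ℝ E] (μ : Measure E)
    [μ.IsAddHaarMeasure] {k : E → ℝ} {r ρ : ℝ} (hr : 0 < r) (hρ : ρ ≠ 0)
    (hk : ∀ w, k (r • w) = ρ * k w) (g : E → ℝ) (K : ℝ) (v₀ v : E) :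
    ∫ w, k w * (K * g (v₀ + r • (v - w))) ∂μ
      = K / (ρ * r ^ Module.finrank ℝ E) * ∫ w, k w * g (v₀ + r • v - w) ∂μ := by
  have hpt : ∀ w, k w * (K * g (v₀ + r • (v - w)))
      = K / ρ * (k (r • w) * g (v₀ + r • v - r • w)) := by
    intro w
    rw [hk, smul_sub, add_sub_assoc]
    field_simp
  simp_rw [hpt]
  rw [integral_const_mul, Measure.integral_comp_smul μ (fun w => k w * g (v₀ + r • v - w)),
    abs_of_pos (by positivity), smul_eq_mul]
  field_simp

theorem pd_const_mul_comp_affine (g : E3 → ℝ) (K c : ℝ) (b : E3) (j : Fin 3) (u : E3) :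
    pd (fun w => K * g (b + c • w)) j u = K * c * pd g j (b + c • u) := by
  have h : (fun w => K * g (b + c • w)) = K • ((fun y => g (b + y)) <| c • ·) := rfl
  rw [pd, h, fderiv_const_smul_field, Pi.smul_apply,
    fderiv_comp_smul (f := fun y => g (b + y)), fderiv_comp_add_left]
  simp [pd, mul_assoc]

theorem projMat_smul {r : ℝ} (hr : r ≠ 0) (w : E3) (i j : Fin 3) :
    projMat (r • w) i j = projMat w i j := by
  simp only [projMat, norm_smul, PiLp.smul_apply, smul_eq_mul, Real.norm_eq_abs, mul_pow, sq_abs]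
  rw [mul_mul_mul_comm, ← sq, mul_div_mul_left _ _ (pow_ne_zero 2 hr)]

section VelocityRescale

variable (γ : ℝ) {r : ℝ} (K : ℝ) (g : E3 → ℝ) (v₀ v : E3)

theorem aBar_rescale (hr : 0 < r) (aγ : ℝ) (i j : Fin 3) :
    aBar γ aγ (fun u => K * g (v₀ + r • u)) v i j
      = K / (r ^ γ * r ^ 5) * aBar γ aγ g (v₀ + r • v) i j := by
  have hk : ∀ w : E3, ‖r • w‖ ^ (γ + 2) * projMat (r • w) i j
      = r ^ γ * r ^ 2 * (‖w‖ ^ (γ + 2) * projMat w i j) := by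
    intro w
    rw [norm_smul_rpow hr.le, projMat_smul hr.ne', Real.rpow_add hr, Real.rpow_two]
    ring
  rw [aBar, aBar, integral_homogeneous_mul_comp_affine volume hr (by positivity) hk,
    finrank_euclideanSpace_fin]
  ring

theorem bBar_rescale (hr : 0 < r) (bγ : ℝ) (i : Fin 3) :
    bBar γ bγ (fun u => K * g (v₀ + r • u)) v i
      = K / (r ^ γ * r ^ 4) * bBar γ bγ g (v₀ + r • v) i := by
  have hk : ∀ w : E3, ‖r • w‖ ^ γ * (r • w) i = r ^ γ * r * (‖w‖ ^ γ * w i) := by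
    intro w
    rw [norm_smul_rpow hr.le, PiLp.smul_apply, smul_eq_mul]
    ring
  rw [bBar, bBar, integral_homogeneous_mul_comp_affine volume hr (by positivity) hk,
    finrank_euclideanSpace_fin]
  ring

theorem cBar_rescale (hr : 0 < r) (cγ : ℝ) :
    cBar γ cγ (fun u => K * g (v₀ + r • u)) v
      = K / (r ^ γ * r ^ 3) * cBar γ cγ g (v₀ + r • v) := by
  rw [cBar, cBar]
  split_ifs with hγ
  · rw [hγ, Real.rpow_neg hr.le, Real.rpow_ofNat]
    field_simp
  · have hk : ∀ w : E3, ‖r • w‖ ^ γ = r ^ γ * ‖w‖ ^ γ := fun w => norm_smul_rpow hr.le w γ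
    rw [integral_homogeneous_mul_comp_affine volume hr (by positivity) hk,
      finrank_euclideanSpace_fin]
    ring

theorem landauRHS_rescale (hr : 0 < r) (aγ bγ cγ : ℝ) :
    landauRHS γ aγ bγ cγ (fun u => K * g (v₀ + r • u)) v
      = K ^ 2 / (r ^ γ * r ^ 3) * landauRHS γ aγ bγ cγ g (v₀ + r • v) := by
  have hdiv : ∀ i, pd (fun u => ∑ j, aBar γ aγ (fun u => K * g (v₀ + r • u)) u i j
        * pd (fun u => K * g (v₀ + r • u)) j u) i v
      = K ^ 2 / (r ^ γ * r ^ 3) *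
          pd (fun w => ∑ j, aBar γ aγ g w i j * pd g j w) i (v₀ + r • v) := by
    intro i
    have hflux : (fun u => ∑ j, aBar γ aγ (fun u => K * g (v₀ + r • u)) u i j
          * pd (fun u => K * g (v₀ + r • u)) j u)
        = fun u => K ^ 2 / (r ^ γ * r ^ 4) *
          (fun w => ∑ j, aBar γ aγ g w i j * pd g j w) (v₀ + r • u) := by
      funext u
      simp only [aBar_rescale γ K g v₀ u hr, pd_const_mul_comp_affine, Finset.mul_sum]
      refine Finset.sum_congr rfl fun j _ => ?_
      field_simp
    rw [hflux, pd_const_mul_comp_affine (fun w => ∑ j, aBar γ aγ g w i j * pd g j w)]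
    field_simp
  simp only [landauRHS, divV, hdiv]
  simp only [pd_const_mul_comp_affine, bBar_rescale γ K g v₀ v hr, cBar_rescale γ K g v₀ v hr]
  rw [mul_add, mul_add, Finset.mul_sum, Finset.mul_sum]
  congr 1
  · congr 1
    refine Finset.sum_congr rfl fun i _ => ?_
    field_simp
  · ring

end VelocityRescale

theorem transportD_eq_deriv_along_characteristic (f : ℝ → E3 → E3 → ℝ) (t : ℝ) (x v : E3)
    (hf : DifferentiableAt ℝ (fun p : ℝ × E3 => f p.1 p.2 v) (t, x)) :
    transportD f t x v = deriv (fun s => f (t + s) (x + s • v) v) 0 := by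
  set φ := fderiv ℝ (fun p : ℝ × E3 => f p.1 p.2 v) (t, x)
  have htime : HasDerivAt (fun s => f s x v) (φ (1, 0)) t :=
    HasFDerivAt.comp_hasDerivAt (l := fun p : ℝ × E3 => f p.1 p.2 v) t hf.hasFDerivAt
      ((hasDerivAt_id' t).prodMk (hasDerivAt_const t x))
  have hspace : ∀ i, pd (fun y => f t y v) i x = φ (0, EuclideanSpace.single i 1) := by
    intro i
    have hslice : HasFDerivAt (fun y : E3 => f t y v)
        (φ.comp ((0 : E3 →L[ℝ] ℝ).prod (ContinuousLinearMap.id ℝ E3))) x :=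
      hf.hasFDerivAt.comp x ((hasFDerivAt_const t x).prodMk (hasFDerivAt_id x))
    rw [pd, hslice.fderiv]
    simp
  have hline : HasDerivAt (fun s : ℝ => ((t + s, x + s • v) : ℝ × E3)) (1, v) 0 := by
    refine ((hasDerivAt_id' 0).const_add t).prodMk ?_
    simpa using ((hasDerivAt_id' (0 : ℝ)).smul_const v).const_add x
  have hchar : HasDerivAt (fun s => f (t + s) (x + s • v) v) (φ (1, v)) 0 :=
    hf.hasFDerivAt.comp_hasDerivAt_of_eq 0 hline (by simp)
  have hdecomp : ((1 : ℝ), v) = (1, 0) + ∑ i, v i • ((0 : ℝ), EuclideanSpace.single i (1 : ℝ)) := by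
    refine Prod.ext (by simp [Prod.fst_sum]) ?_
    simp [Prod.snd_sum, EuclideanSpace.sum_smul_single_one]
  rw [hchar.deriv, transportD, htime.deriv, hdecomp, map_add, map_sum]
  simp only [map_smul, smul_eq_mul, hspace]

def galileanRescale (t₀ : ℝ) (x₀ v₀ : E3) (r : ℝ) (p : ℝ × E3) : ℝ × E3 :=
  (t₀ + r ^ 2 * p.1, x₀ + r ^ 3 • p.2 + (r ^ 2 * p.1) • v₀)

theorem contDiff_galileanRescale {n : WithTop ℕ∞} (t₀ : ℝ) (x₀ v₀ : E3) (r : ℝ) :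
    ContDiff ℝ n (galileanRescale t₀ x₀ v₀ r) := by
  unfold galileanRescale
  fun_prop

theorem transportD_rescale (f : ℝ → E3 → E3 → ℝ) (K t₀ : ℝ) (x₀ v₀ : E3) (r t : ℝ) (x v : E3)
    (hf : DifferentiableAt ℝ (fun p : ℝ × E3 => f p.1 p.2 (v₀ + r • v))
      (t₀ + r ^ 2 * t, x₀ + r ^ 3 • x + (r ^ 2 * t) • v₀)) :
    transportD
        (fun t x v => K * f (t₀ + r ^ 2 * t) (x₀ + r ^ 3 • x + (r ^ 2 * t) • v₀) (v₀ + r • v)) t x v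
      = K * r ^ 2 *
          transportD f (t₀ + r ^ 2 * t) (x₀ + r ^ 3 • x + (r ^ 2 * t) • v₀) (v₀ + r • v) := by
  have hrescale : DifferentiableAt ℝ (fun p : ℝ × E3 =>
      K * f (t₀ + r ^ 2 * p.1) (x₀ + r ^ 3 • p.2 + (r ^ 2 * p.1) • v₀) (v₀ + r • v)) (t, x) :=
    (hf.comp (t, x)
      ((contDiff_galileanRescale t₀ x₀ v₀ r).differentiable one_ne_zero _)).const_mul K
  set h : ℝ → ℝ := fun σ => f (t₀ + r ^ 2 * t + σ)
    (x₀ + r ^ 3 • x + (r ^ 2 * t) • v₀ + σ • (v₀ + r • v)) (v₀ + r • v)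
  have hchar : (fun s => K * f (t₀ + r ^ 2 * (t + s))
        (x₀ + r ^ 3 • (x + s • v) + (r ^ 2 * (t + s)) • v₀) (v₀ + r • v))
      = fun s => K * h (r ^ 2 * s) := by
    funext s
    congr 2
    · ring
    · module
  rw [transportD_eq_deriv_along_characteristic _ _ _ _ hrescale,
    transportD_eq_deriv_along_characteristic _ _ _ _ hf, hchar, deriv_const_mul_field,
    deriv_comp_mul_left, mul_zero, smul_eq_mul, mul_assoc]

theorem landau_shifted_scaling_invariance_general
    (γ aγ bγ cγ : ℝ)
    (D : Set (ℝ × E3 × E3))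
    (f : ℝ → E3 → E3 → ℝ) (hf : IsLandauSolution γ aγ bγ cγ D f)
    (t₀ : ℝ) (x₀ v₀ : E3) (r : ℝ) (hr : 0 < r) :
    IsLandauSolution γ aγ bγ cγ
      {z : ℝ × E3 × E3 |
        (t₀ + r ^ 2 * z.1, x₀ + r ^ 3 • z.2.1 + (r ^ 2 * z.1) • v₀, v₀ + r • z.2.2) ∈ D}
      (fun t x v =>
        r ^ ((5 : ℝ) + γ) * f (t₀ + r ^ 2 * t) (x₀ + r ^ 3 • x + (r ^ 2 * t) • v₀)
          (v₀ + r • v)) := by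
  have hK : 0 < r ^ ((5 : ℝ) + γ) := by positivity
  refine ⟨fun t x v hz => mul_nonneg hK.le (hf.nonneg _ _ _ hz), fun t x v hz => ?_,
    fun t x v hz => ?_, fun t x v hz => ?_⟩
  · exact contDiffAt_const.mul
      ((hf.c1_tx _ _ _ hz).comp (t, x) (contDiff_galileanRescale t₀ x₀ v₀ r).contDiffAt)
  · exact contDiffAt_const.mul ((hf.c2_v _ _ _ hz).comp v (by fun_prop))
  · beta_reduce
    rw [transportD_rescale _ _ _ _ _ _ _ _ _ ((hf.c1_tx _ _ _ hz).differentiableAt one_ne_zero),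
      landauRHS_rescale γ _ _ _ _ hr, hf.eqn _ _ _ hz, Real.rpow_add hr, Real.rpow_ofNat]
    field_simp

/-- Galilean-shifted scaling invariance of the Landau equation.
If `f` is a classical solution on an open set `D`, then
`f_r(t,x,v) = r^{5+γ} f(t₀ + r²t, x₀ + r³x + r²t v₀, v₀ + rv)` is a classical solution
on the pulled-back domain. -/
theorem landau_shifted_scaling_invariance
    (γ aγ bγ cγ : ℝ)
    (hγ : γ ∈ Set.Icc (-3 : ℝ) 1) (haγ : 0 < aγ) (hbγ : 0 < bγ) (hcγ : 0 < cγ)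
    (D : Set (ℝ × E3 × E3)) (hD : IsOpen D)
    (f : ℝ → E3 → E3 → ℝ) (hf : IsLandauSolution γ aγ bγ cγ D f)
    (t₀ : ℝ) (x₀ v₀ : E3) (r : ℝ) (hr : 0 < r) :
    IsLandauSolution γ aγ bγ cγ
      {z : ℝ × E3 × E3 |
        (t₀ + r ^ 2 * z.1, x₀ + r ^ 3 • z.2.1 + (r ^ 2 * z.1) • v₀, v₀ + r • z.2.2) ∈ D}
      (fun t x v =>
        r ^ ((5 : ℝ) + γ) * f (t₀ + r ^ 2 * t) (x₀ + r ^ 3 • x + (r ^ 2 * t) • v₀)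
          (v₀ + r • v)) :=
  landau_shifted_scaling_invariance_general γ aγ bγ cγ D f hf t₀ x₀ v₀ r hr
end
end

section
/- Let γ ∈ [-3,-2] and let q > 3/(5+γ) with q < ∞, and denote q' = q/(q−1). Then there is a constant C > 0 depending only on γ and q such that for every nonnegative f ∈ L¹(ℝ³) ∩ L^q(ℝ³) and every v ∈ ℝ³: ∫_{ℝ³} |w|^{γ+2} f(v−w) dw ≤ C ‖f‖_{L^q(ℝ³)}^{−q'(γ+2)/3} ‖f‖_{L¹(ℝ³)}^{1 + q'(γ+2)/3}. -/
open MeasureTheory Real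
open scoped ENNReal NNReal

noncomputable section

/-! Split the integral at a radius `R`. On the ball, Hölder's inequality with exponents `(q', q)`
gives `‖|·|^(γ+2)‖_{L^q'(B_R)} ‖f‖_q`; the first factor is finite because `(γ+2) q' > -3`
(equivalently `q > 3/(5+γ)`) and, by homogeneity, equals `R^(γ+2+3/q')` times its value on the
unit ball. Off the ball `|w|^(γ+2) ≤ R^(γ+2)` since `γ+2 ≤ 0`, giving `R^(γ+2) ‖f‖_1`. The radius
with `R^(3/q') = ‖f‖_1 / ‖f‖_q` balances the two terms. -/

open Metric Module

lemma balanced_radius_rpow_eq {a b d p : ℝ} (ha : 0 < a) (hb : 0 < b) (hd : d ≠ 0) (hp : p ≠ 0)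
    (c α : ℝ) :
    c * ((a / b) ^ (p / d)) ^ (α + d / p) * b + ((a / b) ^ (p / d)) ^ α * a =
      (c + 1) * b ^ (-p * α / d) * a ^ (1 + p * α / d) := by
  have hab : 0 < a / b := div_pos ha hb
  have hR : ((a / b) ^ (p / d)) ^ (d / p) = a / b := by
    rw [← rpow_mul hab.le, div_mul_div_cancel₀ hd, div_self hp, rpow_one]
  rw [rpow_add (by positivity), hR, ← rpow_mul hab.le, div_rpow ha.le hb.le, rpow_add ha,
    rpow_one, neg_mul, neg_div, rpow_neg hb.le, show p / d * α = p * α / d by ring]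
  field_simp

section NormRpowKernel

variable {E : Type*} [NormedAddCommGroup E] [MeasurableSpace E] [BorelSpace E]

lemma setLIntegral_compl_ball_rpow_mul_le (μ : Measure E) {α R : ℝ} (hα : α ≤ 0) (hR : 0 < R)
    (g : E → ℝ≥0∞) :
    ∫⁻ w in (ball 0 R)ᶜ, ENNReal.ofReal (‖w‖ ^ α) * g w ∂μ ≤
      ENNReal.ofReal (R ^ α) * ∫⁻ w, g w ∂μ :=
  calc ∫⁻ w in (ball 0 R)ᶜ, ENNReal.ofReal (‖w‖ ^ α) * g w ∂μ
      ≤ ∫⁻ w in (ball 0 R)ᶜ, ENNReal.ofReal (R ^ α) * g w ∂μ := by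
        refine setLIntegral_mono' measurableSet_ball.compl fun w hw => ?_
        gcongr ?_ * _
        exact ENNReal.ofReal_le_ofReal (rpow_le_rpow_of_nonpos hR (by simpa using hw) hα)
    _ ≤ ∫⁻ w, ENNReal.ofReal (R ^ α) * g w ∂μ := setLIntegral_le_lintegral _ _
    _ = ENNReal.ofReal (R ^ α) * ∫⁻ w, g w ∂μ := lintegral_const_mul' _ _ ENNReal.ofReal_ne_top

lemma setLIntegral_ball_rpow_mul_le (μ : Measure E) {α p q R : ℝ} (hpq : p.HolderConjugate q)
    {g : E → ℝ≥0∞} (hg : AEMeasurable g μ) :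
    ∫⁻ w in ball 0 R, ENNReal.ofReal (‖w‖ ^ α) * g w ∂μ ≤
      (∫⁻ w in ball 0 R, ENNReal.ofReal (‖w‖ ^ (α * p)) ∂μ) ^ (1 / p) *
        (∫⁻ w, g w ^ q ∂μ) ^ (1 / q) := by
  have hK : ∀ w : E, ENNReal.ofReal (‖w‖ ^ α) ^ p = ENNReal.ofReal (‖w‖ ^ (α * p)) := fun w => by
    rw [ENNReal.ofReal_rpow_of_nonneg (by positivity) hpq.nonneg, ← rpow_mul (norm_nonneg w)]
  calc ∫⁻ w in ball 0 R, ENNReal.ofReal (‖w‖ ^ α) * g w ∂μ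
      ≤ (∫⁻ w in ball 0 R, ENNReal.ofReal (‖w‖ ^ α) ^ p ∂μ) ^ (1 / p) *
          (∫⁻ w in ball 0 R, g w ^ q ∂μ) ^ (1 / q) :=
        ENNReal.lintegral_mul_le_Lp_mul_Lq _ hpq (by fun_prop) hg.restrict
    _ ≤ _ := by
        simp only [hK]
        gcongr
        · exact hpq.symm.one_div_nonneg
        · exact Measure.restrict_le_self

variable [NormedSpace ℝ E] [FiniteDimensional ℝ E] (μ : Measure E) [μ.IsAddHaarMeasure]

lemma setIntegral_ball_norm_rpow (s : ℝ) {R : ℝ} (hR : 0 < R) :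
    ∫ x in ball 0 R, ‖x‖ ^ s ∂μ = R ^ (s + finrank ℝ E) * ∫ x in ball (0 : E) 1, ‖x‖ ^ s ∂μ := by
  have h := μ.setIntegral_comp_smul_of_pos (fun x : E => ‖x‖ ^ s) (ball 0 1) hR
  simp only [smul_unitBall_of_pos hR, norm_smul, norm_of_nonneg hR.le,
    mul_rpow hR.le (norm_nonneg _), integral_const_mul, smul_eq_mul] at h
  rw [rpow_add hR, rpow_natCast, mul_comm (R ^ s), mul_assoc, h,
    mul_inv_cancel_left₀ (by positivity)]

lemma setLIntegral_ball_norm_rpow [Nontrivial E] {s R : ℝ} (hs : -(finrank ℝ E : ℝ) < s)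
    (hR : 0 < R) :
    ∫⁻ x in ball 0 R, ENNReal.ofReal (‖x‖ ^ s) ∂μ =
      ENNReal.ofReal (R ^ (s + finrank ℝ E) * ∫ x in ball (0 : E) 1, ‖x‖ ^ s ∂μ) := by
  have hint : IntegrableOn (fun x : E => ‖x‖ ^ s) (ball 0 R) μ :=
    integrableOn_ball_of_norm_le_rpow finrank_pos (C := 1) (α := -s) (by linarith)
      (ae_of_all _ fun x => by rw [one_mul, neg_neg, norm_of_nonneg (by positivity)])
      (by fun_prop : Measurable fun x : E => ‖x‖ ^ s).aestronglyMeasurable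
  rw [← setIntegral_ball_norm_rpow μ s hR,
    ofReal_integral_eq_lintegral_ofReal hint (ae_of_all _ fun x => by positivity)]

lemma lintegral_norm_rpow_mul_enorm_le [Nontrivial E] {F : Type*} [NormedAddCommGroup F]
    {α p q R : ℝ} (hα : α ≤ 0) (hpq : p.HolderConjugate q) (hαp : -(finrank ℝ E : ℝ) < α * p)
    (hR : 0 < R) {g : E → F} (hg : AEStronglyMeasurable g μ) :
    ∫⁻ w, ENNReal.ofReal (‖w‖ ^ α) * ‖g w‖ₑ ∂μ ≤
      ENNReal.ofReal ((∫ x in ball (0 : E) 1, ‖x‖ ^ (α * p) ∂μ) ^ (1 / p) *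
          R ^ (α + finrank ℝ E / p)) * eLpNorm g (ENNReal.ofReal q) μ +
        ENNReal.ofReal (R ^ α) * eLpNorm g 1 μ := by
  have hI : 0 ≤ ∫ x in ball (0 : E) 1, ‖x‖ ^ (α * p) ∂μ :=
    setIntegral_nonneg measurableSet_ball fun x _ => by positivity
  have hexp : (α * p + finrank ℝ E) * (1 / p) = α + finrank ℝ E / p := by
    field_simp [hpq.ne_zero]
  have hnear := setLIntegral_ball_rpow_mul_le μ (α := α) (R := R) hpq hg.enorm
  rw [setLIntegral_ball_norm_rpow μ hαp hR, ENNReal.ofReal_rpow_of_nonneg (by positivity)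
    hpq.one_div_nonneg, mul_rpow (by positivity) hI, ← rpow_mul hR.le,
    hexp, mul_comm (R ^ _)] at hnear
  rw [← lintegral_add_compl _ (measurableSet_ball (x := 0) (ε := R)),
    eLpNorm_one_eq_lintegral_enorm, eLpNorm_eq_lintegral_rpow_enorm_toReal
      (by simpa using hpq.symm.pos) ENNReal.ofReal_ne_top, ENNReal.toReal_ofReal hpq.symm.nonneg]
  exact add_le_add hnear (setLIntegral_compl_ball_rpow_mul_le μ hα hR _)

theorem exists_lintegral_norm_rpow_mul_enorm_le [Nontrivial E] {F : Type*} [NormedAddCommGroup F]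
    {α p q : ℝ} (hα : α ≤ 0) (hpq : p.HolderConjugate q)
    (hαp : -(finrank ℝ E : ℝ) < α * p) :
    ∃ C : ℝ, 0 < C ∧ ∀ g : E → F, MemLp g 1 μ → MemLp g (ENNReal.ofReal q) μ →
      ∫⁻ w, ENNReal.ofReal (‖w‖ ^ α) * ‖g w‖ₑ ∂μ ≤
        ENNReal.ofReal (C * (eLpNorm g (ENNReal.ofReal q) μ).toReal ^ (-p * α / finrank ℝ E)
          * (eLpNorm g 1 μ).toReal ^ (1 + p * α / finrank ℝ E)) := by
  set c := (∫ x in ball (0 : E) 1, ‖x‖ ^ (α * p) ∂μ) ^ (1 / p)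
  refine ⟨c + 1, by positivity, fun g hg1 hgq => ?_⟩
  by_cases hg0 : g =ᵐ[μ] 0
  · calc ∫⁻ w, ENNReal.ofReal (‖w‖ ^ α) * ‖g w‖ₑ ∂μ = ∫⁻ _, 0 ∂μ :=
          lintegral_congr_ae (by filter_upwards [hg0] with w hw; simp [hw])
      _ ≤ _ := by rw [lintegral_zero]; exact zero_le
  obtain ⟨n1, hn1, hn1_eq⟩ : ∃ n1 > 0, eLpNorm g 1 μ = ENNReal.ofReal n1 :=
    ⟨_, ENNReal.toReal_pos (by rwa [Ne, eLpNorm_eq_zero_iff hg1.1 one_ne_zero])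
      hg1.eLpNorm_ne_top, (ENNReal.ofReal_toReal hg1.eLpNorm_ne_top).symm⟩
  obtain ⟨nq, hnq, hnq_eq⟩ : ∃ nq > 0, eLpNorm g (ENNReal.ofReal q) μ = ENNReal.ofReal nq :=
    ⟨_, ENNReal.toReal_pos
      (by rwa [Ne, eLpNorm_eq_zero_iff hgq.1 (by simpa using hpq.symm.pos)])
      hgq.eLpNorm_ne_top, (ENNReal.ofReal_toReal hgq.eLpNorm_ne_top).symm⟩
  refine (lintegral_norm_rpow_mul_enorm_le μ hα hpq hαp (R := (n1 / nq) ^ (p / finrank ℝ E))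
    (by positivity) hg1.1).trans_eq ?_
  rw [hn1_eq, hnq_eq, ENNReal.toReal_ofReal hn1.le, ENNReal.toReal_ofReal hnq.le,
    ← balanced_radius_rpow_eq hn1 hnq (Nat.cast_pos.2 finrank_pos).ne' hpq.ne_zero,
    ENNReal.ofReal_add (by positivity) (by positivity)]
  congr 1 <;> exact (ENNReal.ofReal_mul (by positivity)).symm

end NormRpowKernel

/-- the convolution estimate
`(|·|^{γ+2} ∗ f)(v) ≤ C ‖f‖_{L^q}^{−q'(γ+2)/3} ‖f‖_{L¹}^{1+q'(γ+2)/3}` for nonnegative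
`f ∈ L¹ ∩ L^q(ℝ³)` with `q > 3/(5+γ)`, where `q' = q/(q−1)`. -/
theorem convolution_bound_gamma_plus_two
    (γ q : ℝ) (hγ : γ ∈ Set.Icc (-3 : ℝ) (-2)) (hq : 3 / (5 + γ) < q) :
    ∃ C : ℝ, 0 < C ∧ ∀ f : E3 → ℝ,
      (∀ v, 0 ≤ f v) →
      MemLp f 1 volume → MemLp f (ENNReal.ofReal q) volume →
      ∀ v : E3,
        (∫⁻ w : E3, ENNReal.ofReal (‖w‖ ^ (γ + 2) * f (v - w))) ≤
          ENNReal.ofReal (C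
            * (eLpNorm f (ENNReal.ofReal q) volume).toReal ^ (-(q / (q - 1)) * (γ + 2) / 3)
            * (eLpNorm f 1 volume).toReal ^ (1 + (q / (q - 1)) * (γ + 2) / 3)) := by
  obtain ⟨hγ₁, hγ₂⟩ := hγ
  have h5γ : 0 < 5 + γ := by linarith
  have hq1 : 1 < q := lt_of_le_of_lt ((one_le_div h5γ).2 (by linarith)) hq
  have hpq : (q / (q - 1)).HolderConjugate q := (Real.HolderConjugate.conjExponent hq1).symm
  have hαp : -(finrank ℝ E3 : ℝ) < (γ + 2) * (q / (q - 1)) := by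
    rw [finrank_euclideanSpace_fin, Nat.cast_ofNat, mul_div_assoc', lt_div_iff₀ (by linarith)]
    nlinarith [(div_lt_iff₀ h5γ).1 hq]
  obtain ⟨C, hC, hbound⟩ :=
    exists_lintegral_norm_rpow_mul_enorm_le (F := ℝ) volume (by linarith) hpq hαp
  refine ⟨C, hC, fun f hf₀ hf₁ hfq v => ?_⟩
  have hT := Measure.measurePreserving_sub_left (volume : Measure E3) v
  have h := hbound _ (hf₁.comp_measurePreserving hT) (hfq.comp_measurePreserving hT)
  rw [eLpNorm_comp_measurePreserving hf₁.1 hT, eLpNorm_comp_measurePreserving hfq.1 hT,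
    finrank_euclideanSpace_fin, Nat.cast_ofNat] at h
  refine le_of_eq_of_le (lintegral_congr fun w => ?_) h
  rw [ENNReal.ofReal_mul (by positivity), Function.comp_apply, Real.enorm_eq_ofReal (hf₀ _)]
end
end

section
/- Let γ ∈ (−3,0), and let μ, K, M₀ > 0. Suppose f : ℝ³ → [0,∞) is measurable with f(v) ≤ K e^{−μ|v|²} for all v and ∫_{ℝ³} f(v) dv ≤ M₀. Then there is a constant C > 0 depending only on γ such that for every v₀ ∈ ℝ³ with v₀ ≠ 0: ∫_{ℝ³} |w|^γ f(v₀ − w) dw ≤ C ( K e^{−μ|v₀|²/4} |v₀|^{γ+3} + M₀ |v₀|^γ ). -/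
open MeasureTheory Real
open Metric Set
open scoped ENNReal NNReal

noncomputable section

lemma meas_rpow (γ : ℝ) : Measurable fun w : E3 => ENNReal.ofReal (‖w‖ ^ γ) := by
  fun_prop

lemma rpow_nat_comm (a : ℝ) (ha : 0 ≤ a) (n : ℕ) (γ : ℝ) :
    ((a ^ n : ℝ)) ^ γ = (a ^ γ) ^ n := by
  rw [← Real.rpow_natCast a n, ← Real.rpow_mul ha, mul_comm, Real.rpow_mul ha,
    Real.rpow_natCast]

/-- Scaling of the singular kernel integral over balls. -/
lemma ball_scaling (γ : ℝ) {R : ℝ} (hR : 0 < R) :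
    (∫⁻ w : E3 in ball 0 R, ENNReal.ofReal (‖w‖ ^ γ)) =
      ENNReal.ofReal (R ^ (γ + 3)) * ∫⁻ w : E3 in ball 0 1, ENNReal.ofReal (‖w‖ ^ γ) := by
  have hfin : Module.finrank ℝ E3 = 3 := by simp
  have hmap := Measure.map_addHaar_smul (volume : Measure E3) (ne_of_gt hR)
  rw [hfin] at hmap
  have hpre : (fun x : E3 => R • x) ⁻¹' ball 0 R = ball 0 1 := by
    ext u
    simp only [mem_preimage, mem_ball_zero_iff, norm_smul, Real.norm_eq_abs,
      abs_of_pos hR]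
    constructor
    · intro h
      nlinarith [norm_nonneg u]
    · intro h
      nlinarith [norm_nonneg u]
  have h1 : (∫⁻ w : E3 in ball 0 R, ENNReal.ofReal (‖w‖ ^ γ)
        ∂(Measure.map (fun x : E3 => R • x) volume)) =
      ∫⁻ u : E3 in ball 0 1, ENNReal.ofReal (‖R • u‖ ^ γ) := by
    rw [setLIntegral_map measurableSet_ball (meas_rpow γ) (measurable_const_smul R), hpre]
  have h2 : (∫⁻ w : E3 in ball 0 R, ENNReal.ofReal (‖w‖ ^ γ)
        ∂(Measure.map (fun x : E3 => R • x) volume)) =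
      ENNReal.ofReal |((R : ℝ) ^ 3)⁻¹| * ∫⁻ w : E3 in ball 0 R, ENNReal.ofReal (‖w‖ ^ γ) := by
    rw [hmap]
    simp [Measure.restrict_smul, lintegral_smul_measure]
  have h3 : ∀ u : E3, ENNReal.ofReal (‖R • u‖ ^ γ) =
      ENNReal.ofReal (R ^ γ) * ENNReal.ofReal (‖u‖ ^ γ) := by
    intro u
    rw [norm_smul, Real.norm_eq_abs, abs_of_pos hR,
      Real.mul_rpow hR.le (norm_nonneg u), ENNReal.ofReal_mul (Real.rpow_nonneg hR.le γ)]
  have h4 : (∫⁻ u : E3 in ball 0 1, ENNReal.ofReal (‖R • u‖ ^ γ)) =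
      ENNReal.ofReal (R ^ γ) * ∫⁻ u : E3 in ball 0 1, ENNReal.ofReal (‖u‖ ^ γ) := by
    simp_rw [h3]
    rw [lintegral_const_mul _ (meas_rpow γ)]
  have key : ENNReal.ofReal |((R : ℝ) ^ 3)⁻¹| * ∫⁻ w : E3 in ball 0 R, ENNReal.ofReal (‖w‖ ^ γ)
      = ENNReal.ofReal (R ^ γ) * ∫⁻ u : E3 in ball 0 1, ENNReal.ofReal (‖u‖ ^ γ) := by
    rw [← h2, h1, h4]
  have hcancel : ENNReal.ofReal ((R : ℝ) ^ 3) * ENNReal.ofReal |((R : ℝ) ^ 3)⁻¹| = 1 := by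
    rw [← ENNReal.ofReal_mul (by positivity)]
    rw [abs_of_pos (by positivity)]
    rw [mul_inv_cancel₀ (by positivity)]
    simp
  calc (∫⁻ w : E3 in ball 0 R, ENNReal.ofReal (‖w‖ ^ γ))
      = ENNReal.ofReal ((R : ℝ) ^ 3) * (ENNReal.ofReal |((R : ℝ) ^ 3)⁻¹| *
          ∫⁻ w : E3 in ball 0 R, ENNReal.ofReal (‖w‖ ^ γ)) := by
        rw [← mul_assoc, hcancel, one_mul]
    _ = ENNReal.ofReal ((R : ℝ) ^ 3) * (ENNReal.ofReal (R ^ γ) *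
          ∫⁻ u : E3 in ball 0 1, ENNReal.ofReal (‖u‖ ^ γ)) := by rw [key]
    _ = ENNReal.ofReal (R ^ (γ + 3)) * ∫⁻ w : E3 in ball 0 1, ENNReal.ofReal (‖w‖ ^ γ) := by
        rw [← mul_assoc, ← ENNReal.ofReal_mul (by positivity)]
        congr 2
        rw [← Real.rpow_natCast R 3, ← Real.rpow_add hR]
        norm_num [add_comm]

/-- Finiteness of the unit-ball integral of the singular kernel. -/
lemma unit_ball_finite (γ : ℝ) (hγ : γ ∈ Set.Ioo (-3 : ℝ) 0) :
    (∫⁻ w : E3 in ball 0 1, ENNReal.ofReal (‖w‖ ^ γ)) < ∞ := by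
  set S : ℕ → Set E3 := fun n => ball 0 ((1/2 : ℝ) ^ n) \ ball 0 ((1/2 : ℝ) ^ (n+1)) with hS
  have cover : ball (0 : E3) 1 ⊆ {0} ∪ ⋃ n, S n := by
    intro w hw
    rcases eq_or_ne w 0 with rfl | hw0
    · exact Or.inl rfl
    have hwpos : 0 < ‖w‖ := norm_pos_iff.2 hw0
    have hw1 : ‖w‖ < 1 := mem_ball_zero_iff.1 hw
    have hex : ∃ n : ℕ, (1/2 : ℝ) ^ (n+1) ≤ ‖w‖ := by
      obtain ⟨k, hk⟩ := exists_pow_lt_of_lt_one hwpos (by norm_num : (1/2 : ℝ) < 1)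
      exact ⟨k, le_trans (pow_le_pow_of_le_one (by norm_num) (by norm_num) (Nat.le_succ k)) hk.le⟩
    right
    refine mem_iUnion.2 ⟨Nat.find hex, ?_, ?_⟩
    · rw [mem_ball_zero_iff]
      rcases Nat.eq_zero_or_pos (Nat.find hex) with h0 | hpos
      · rw [h0]; simpa using hw1
      · obtain ⟨m, hm⟩ := Nat.exists_eq_succ_of_ne_zero hpos.ne'
        rw [hm]
        have := Nat.find_min hex (by omega : m < Nat.find hex)
        push_neg at this
        simpa using this
    · intro hmem
      exact absurd (mem_ball_zero_iff.1 hmem) (not_lt.2 (Nat.find_spec hex))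
  have B1fin : (volume (ball (0 : E3) 1)) < ∞ := measure_ball_lt_top
  set r : ℝ≥0∞ := ENNReal.ofReal ((1/2 : ℝ) ^ (γ + 3)) with hr
  have hrlt : r < 1 := by
    rw [hr, ← ENNReal.ofReal_one]
    exact ENNReal.ofReal_lt_ofReal_iff_of_nonneg (Real.rpow_nonneg (by norm_num) _) |>.2
      (Real.rpow_lt_one (by norm_num) (by norm_num) (by linarith [hγ.1]))
  have term_le : ∀ n : ℕ, (∫⁻ w : E3 in S n, ENNReal.ofReal (‖w‖ ^ γ)) ≤
      (ENNReal.ofReal ((1/2 : ℝ) ^ γ) * volume (ball (0 : E3) 1)) * r ^ n := by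
    intro n
    have hpow_pos : (0:ℝ) < (1/2 : ℝ) ^ (n+1) := by positivity
    have step1 : (∫⁻ w : E3 in S n, ENNReal.ofReal (‖w‖ ^ γ)) ≤
        ENNReal.ofReal (((1/2 : ℝ) ^ (n+1)) ^ γ) * volume (S n) := by
      rw [← setLIntegral_const]
      refine setLIntegral_mono' (measurableSet_ball.diff measurableSet_ball) ?_
      intro w hwmem
      have : (1/2 : ℝ) ^ (n+1) ≤ ‖w‖ := by
        have := hwmem.2
        rw [mem_ball_zero_iff] at this
        exact not_lt.1 (fun h => this h)
      exact ENNReal.ofReal_le_ofReal (Real.rpow_le_rpow_of_nonpos hpow_pos this hγ.2.le)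
    have step2 : volume (S n) ≤ ENNReal.ofReal (((1/2 : ℝ) ^ n) ^ 3) * volume (ball (0 : E3) 1) := by
      calc volume (S n) ≤ volume (ball (0 : E3) ((1/2 : ℝ) ^ n)) := measure_mono diff_subset
        _ = ENNReal.ofReal (((1/2 : ℝ) ^ n) ^ Module.finrank ℝ E3) * volume (ball (0 : E3) 1) :=
          Measure.addHaar_ball volume 0 (by positivity)
        _ = ENNReal.ofReal (((1/2 : ℝ) ^ n) ^ 3) * volume (ball (0 : E3) 1) := by
          congr 2
          simp
    calc (∫⁻ w : E3 in S n, ENNReal.ofReal (‖w‖ ^ γ)) ≤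
        ENNReal.ofReal (((1/2 : ℝ) ^ (n+1)) ^ γ) *
          (ENNReal.ofReal (((1/2 : ℝ) ^ n) ^ 3) * volume (ball (0 : E3) 1)) :=
        le_trans step1 (mul_le_mul_right step2 _)
      _ = (ENNReal.ofReal ((1/2 : ℝ) ^ γ) * volume (ball (0 : E3) 1)) * r ^ n := by
        rw [hr, ← ENNReal.ofReal_pow (Real.rpow_nonneg (by norm_num) _) n]
        have e1 : (((1/2 : ℝ) ^ (n+1)) : ℝ) ^ γ = (1/2 : ℝ) ^ γ * ((1/2 : ℝ) ^ γ) ^ n := by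
          rw [pow_succ, Real.mul_rpow (by positivity) (by norm_num),
            rpow_nat_comm (1/2 : ℝ) (by norm_num) n γ]
          ring
        have e2 : ((1/2 : ℝ) ^ (γ + 3)) ^ n = ((1/2 : ℝ) ^ γ) ^ n * ((1/2 : ℝ) ^ n) ^ 3 := by
          rw [Real.rpow_add (by norm_num : (0:ℝ) < 1/2)]
          rw [mul_pow]
          congr 1
          rw [show ((1/2:ℝ) ^ (3:ℝ)) = (1/2:ℝ) ^ (3:ℕ) by
            rw [← Real.rpow_natCast (1/2 : ℝ) 3]; norm_num]
          rw [← pow_mul, ← pow_mul, Nat.mul_comm]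
        have hA : (((1/2 : ℝ) ^ (n+1)) : ℝ) ^ γ * ((1/2 : ℝ) ^ n) ^ 3
            = (1/2 : ℝ) ^ γ * ((1/2 : ℝ) ^ (γ + 3)) ^ n := by
          rw [e1, e2]; ring
        calc ENNReal.ofReal (((1/2 : ℝ) ^ (n+1)) ^ γ) *
              (ENNReal.ofReal (((1/2 : ℝ) ^ n) ^ 3) * volume (ball (0 : E3) 1))
            = ENNReal.ofReal ((((1/2 : ℝ) ^ (n+1)) : ℝ) ^ γ * ((1/2 : ℝ) ^ n) ^ 3) *
                volume (ball (0 : E3) 1) := by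
              rw [ENNReal.ofReal_mul (Real.rpow_nonneg (by positivity) _)]; ring
          _ = ENNReal.ofReal ((1/2 : ℝ) ^ γ * ((1/2 : ℝ) ^ (γ + 3)) ^ n) *
                volume (ball (0 : E3) 1) := by rw [hA]
          _ = ENNReal.ofReal ((1/2 : ℝ) ^ γ) * volume (ball (0 : E3) 1) *
                ENNReal.ofReal (((1/2 : ℝ) ^ (γ + 3)) ^ n) := by
              rw [ENNReal.ofReal_mul (Real.rpow_nonneg (by norm_num) _)]; ring
    -- end term_le
  calc (∫⁻ w : E3 in ball 0 1, ENNReal.ofReal (‖w‖ ^ γ))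
      ≤ ∫⁻ w : E3 in {0} ∪ ⋃ n, S n, ENNReal.ofReal (‖w‖ ^ γ) :=
        lintegral_mono_set cover
    _ ≤ (∫⁻ w : E3 in ({0} : Set E3), ENNReal.ofReal (‖w‖ ^ γ)) +
        ∫⁻ w : E3 in ⋃ n, S n, ENNReal.ofReal (‖w‖ ^ γ) := lintegral_union_le _ _ _
    _ ≤ 0 + ∑' n, ∫⁻ w : E3 in S n, ENNReal.ofReal (‖w‖ ^ γ) := by
        gcongr
        · rw [setLIntegral_measure_zero _ _ (measure_singleton 0)]
        · exact lintegral_iUnion_le _ _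
    _ ≤ 0 + ∑' n, (ENNReal.ofReal ((1/2 : ℝ) ^ γ) * volume (ball (0 : E3) 1)) * r ^ n := by
        gcongr with n
        exact term_le n
    _ = (ENNReal.ofReal ((1/2 : ℝ) ^ γ) * volume (ball (0 : E3) 1)) * (1 - r)⁻¹ := by
        rw [zero_add, ENNReal.tsum_mul_left, ENNReal.tsum_geometric]
    _ < ∞ := by
        refine ENNReal.mul_lt_top (ENNReal.mul_lt_top ENNReal.ofReal_lt_top B1fin) ?_
        exact ENNReal.inv_lt_top.2 (tsub_pos_of_lt hrlt)

/-- Translation invariance for the mass integral. -/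
lemma lintegral_sub_left' (g : E3 → ℝ≥0∞) (v₀ : E3) :
    (∫⁻ w : E3, g (v₀ - w)) = ∫⁻ w : E3, g w := by
  have h1 : (∫⁻ w : E3, g (v₀ + w)) = ∫⁻ w : E3, g w :=
    lintegral_add_left_eq_self g v₀
  have h2 : (∫⁻ w : E3, g (v₀ + (-w))) = ∫⁻ w : E3, g (v₀ + w) := by
    calc (∫⁻ w : E3, g (v₀ + (-w)))
        = ∫⁻ w : E3, (fun u => g (v₀ + u)) ((MeasurableEquiv.neg E3) w) := rfl
      _ = ∫⁻ u : E3, g (v₀ + u) ∂(Measure.map (MeasurableEquiv.neg E3) volume) :=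
          (lintegral_map_equiv (fun u : E3 => g (v₀ + u)) (MeasurableEquiv.neg E3)).symm
      _ = ∫⁻ u : E3, g (v₀ + u) := by
          congr 1
          exact Measure.map_neg_eq_self volume
  calc (∫⁻ w : E3, g (v₀ - w)) = ∫⁻ w : E3, g (v₀ + (-w)) := by simp [sub_eq_add_neg]
    _ = ∫⁻ w : E3, g w := h2.trans h1

/-- splitting the convolution `(|·|^γ ∗ f)(v₀)` using a Gaussian
pointwise bound near `v₀` and the mass bound away from `v₀`:
`∫ |w|^γ f(v₀−w) dw ≤ C (K e^{−μ|v₀|²/4} |v₀|^{γ+3} + M₀ |v₀|^γ)`. -/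
theorem convolution_gamma_gaussian_split
    (γ : ℝ) (hγ : γ ∈ Set.Ioo (-3 : ℝ) 0) :
    ∃ C : ℝ, 0 < C ∧ ∀ (μ K M₀ : ℝ) (f : E3 → ℝ),
      0 < μ → 0 < K → 0 < M₀ →
      Measurable f → (∀ v, 0 ≤ f v) →
      (∀ v : E3, f v ≤ K * Real.exp (-μ * ‖v‖ ^ 2)) →
      (∫⁻ v : E3, ENNReal.ofReal (f v)) ≤ ENNReal.ofReal M₀ →
      ∀ v₀ : E3, v₀ ≠ 0 →
        (∫⁻ w : E3, ENNReal.ofReal (‖w‖ ^ γ * f (v₀ - w))) ≤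
          ENNReal.ofReal (C * (K * Real.exp (-μ * ‖v₀‖ ^ 2 / 4) * ‖v₀‖ ^ (γ + 3)
            + M₀ * ‖v₀‖ ^ γ)) := by
  set c₁ : ℝ≥0∞ := ∫⁻ w : E3 in ball 0 1, ENNReal.ofReal (‖w‖ ^ γ) with hc₁def
  have hc₁ : c₁ < ∞ := unit_ball_finite γ hγ
  have hc₁0 : 0 ≤ c₁.toReal := ENNReal.toReal_nonneg
  refine ⟨c₁.toReal + 9, by positivity, ?_⟩
  intro μ K M₀ f hμ hK hM hmf hf0 hfb hmass v₀ hv₀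
  have hv : 0 < ‖v₀‖ := norm_pos_iff.2 hv₀
  set R : ℝ := ‖v₀‖ / 2 with hRdef
  have hR : 0 < R := by positivity
  have hexp : 0 < Real.exp (-μ * ‖v₀‖ ^ 2 / 4) := Real.exp_pos _
  -- near part
  have hgauss : ∀ w ∈ ball (0 : E3) R, f (v₀ - w) ≤ K * Real.exp (-μ * ‖v₀‖ ^ 2 / 4) := by
    intro w hw
    have hw' : ‖w‖ < R := mem_ball_zero_iff.1 hw
    have h1 : R ≤ ‖v₀ - w‖ := by
      have h := norm_sub_norm_le v₀ w
      rw [hRdef] at hw' ⊢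
      linarith
    have h2 : R ^ 2 ≤ ‖v₀ - w‖ ^ 2 := pow_le_pow_left₀ hR.le h1 2
    calc f (v₀ - w) ≤ K * Real.exp (-μ * ‖v₀ - w‖ ^ 2) := hfb _
      _ ≤ K * Real.exp (-μ * ‖v₀‖ ^ 2 / 4) := by
          apply mul_le_mul_of_nonneg_left (Real.exp_le_exp.2 ?_) hK.le
          have hR2 : R ^ 2 = ‖v₀‖ ^ 2 / 4 := by rw [hRdef]; ring
          nlinarith [hμ.le]
  have hnear : (∫⁻ w : E3 in ball 0 R, ENNReal.ofReal (‖w‖ ^ γ * f (v₀ - w))) ≤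
      ENNReal.ofReal (c₁.toReal * (K * Real.exp (-μ * ‖v₀‖ ^ 2 / 4) * ‖v₀‖ ^ (γ + 3))) := by
    calc (∫⁻ w : E3 in ball 0 R, ENNReal.ofReal (‖w‖ ^ γ * f (v₀ - w)))
        ≤ ∫⁻ w : E3 in ball 0 R,
            ENNReal.ofReal (‖w‖ ^ γ) * ENNReal.ofReal (K * Real.exp (-μ * ‖v₀‖ ^ 2 / 4)) := by
          refine setLIntegral_mono' measurableSet_ball ?_
          intro w hw
          rw [← ENNReal.ofReal_mul (Real.rpow_nonneg (norm_nonneg w) γ)]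
          exact ENNReal.ofReal_le_ofReal
            (mul_le_mul_of_nonneg_left (hgauss w hw) (Real.rpow_nonneg (norm_nonneg w) γ))
      _ = (∫⁻ w : E3 in ball 0 R, ENNReal.ofReal (‖w‖ ^ γ)) *
            ENNReal.ofReal (K * Real.exp (-μ * ‖v₀‖ ^ 2 / 4)) :=
          lintegral_mul_const _ (meas_rpow γ)
      _ = ENNReal.ofReal (R ^ (γ + 3)) * c₁ * ENNReal.ofReal (K * Real.exp (-μ * ‖v₀‖ ^ 2 / 4)) := by
          rw [ball_scaling γ hR, hc₁def]
      _ ≤ ENNReal.ofReal (‖v₀‖ ^ (γ + 3)) * ENNReal.ofReal c₁.toReal *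
            ENNReal.ofReal (K * Real.exp (-μ * ‖v₀‖ ^ 2 / 4)) := by
          have hx : ENNReal.ofReal (R ^ (γ + 3)) ≤ ENNReal.ofReal (‖v₀‖ ^ (γ + 3)) :=
            ENNReal.ofReal_le_ofReal
              (Real.rpow_le_rpow hR.le (by rw [hRdef]; linarith) (by linarith [hγ.1]))
          have hy : c₁ ≤ ENNReal.ofReal c₁.toReal := (ENNReal.ofReal_toReal hc₁.ne).symm.le
          exact mul_le_mul' (mul_le_mul' hx hy) le_rfl
      _ = ENNReal.ofReal (c₁.toReal * (K * Real.exp (-μ * ‖v₀‖ ^ 2 / 4) * ‖v₀‖ ^ (γ + 3))) := by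
          rw [← ENNReal.ofReal_mul (by positivity), ← ENNReal.ofReal_mul (by positivity)]
          congr 1
          ring
  -- far part
  have hfar : (∫⁻ w : E3 in (ball (0 : E3) R)ᶜ, ENNReal.ofReal (‖w‖ ^ γ * f (v₀ - w))) ≤
      ENNReal.ofReal (8 * (M₀ * ‖v₀‖ ^ γ)) := by
    have h8 : (1/8 : ℝ) ≤ (2 : ℝ) ^ γ := by
      have h := Real.rpow_le_rpow_of_exponent_le (by norm_num : (1:ℝ) ≤ 2) hγ.1.le
      have h23 : (2 : ℝ) ^ (-3 : ℝ) = 1/8 := by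
        rw [show (-3 : ℝ) = -((3:ℕ) : ℝ) by norm_num, Real.rpow_neg (by norm_num),
          Real.rpow_natCast]
        norm_num
      rw [← h23]
      exact h
    have hRγ : R ^ γ ≤ 8 * ‖v₀‖ ^ γ := by
      rw [hRdef, Real.div_rpow (norm_nonneg v₀) (by norm_num)]
      rw [div_le_iff₀ (Real.rpow_pos_of_pos (by norm_num) γ)]
      nlinarith [Real.rpow_nonneg (norm_nonneg v₀) γ, h8]
    calc (∫⁻ w : E3 in (ball (0 : E3) R)ᶜ, ENNReal.ofReal (‖w‖ ^ γ * f (v₀ - w)))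
        ≤ ∫⁻ w : E3 in (ball (0 : E3) R)ᶜ,
            ENNReal.ofReal (R ^ γ) * ENNReal.ofReal (f (v₀ - w)) := by
          refine setLIntegral_mono' measurableSet_ball.compl ?_
          intro w hw
          have hRw : R ≤ ‖w‖ := not_lt.1 (fun h => hw (mem_ball_zero_iff.2 h))
          rw [← ENNReal.ofReal_mul (Real.rpow_nonneg hR.le γ)]
          exact ENNReal.ofReal_le_ofReal
            (mul_le_mul_of_nonneg_right (Real.rpow_le_rpow_of_nonpos hR hRw hγ.2.le) (hf0 _))
      _ ≤ ∫⁻ w : E3, ENNReal.ofReal (R ^ γ) * ENNReal.ofReal (f (v₀ - w)) :=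
          setLIntegral_le_lintegral _ _
      _ = ENNReal.ofReal (R ^ γ) * ∫⁻ w : E3, ENNReal.ofReal (f (v₀ - w)) :=
          lintegral_const_mul _ (by fun_prop)
      _ = ENNReal.ofReal (R ^ γ) * ∫⁻ w : E3, ENNReal.ofReal (f w) := by
          rw [lintegral_sub_left' (fun w => ENNReal.ofReal (f w)) v₀]
      _ ≤ ENNReal.ofReal (R ^ γ) * ENNReal.ofReal M₀ := mul_le_mul_right hmass _
      _ ≤ ENNReal.ofReal (8 * (M₀ * ‖v₀‖ ^ γ)) := by
          rw [← ENNReal.ofReal_mul (Real.rpow_nonneg hR.le γ)]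
          refine ENNReal.ofReal_le_ofReal ?_
          nlinarith [hRγ, hM.le, Real.rpow_nonneg hR.le γ]
  -- combine
  have hsplit := lintegral_add_compl (μ := volume)
    (fun w : E3 => ENNReal.ofReal (‖w‖ ^ γ * f (v₀ - w))) (measurableSet_ball (x := (0:E3)) (ε := R))
  calc (∫⁻ w : E3, ENNReal.ofReal (‖w‖ ^ γ * f (v₀ - w)))
      = (∫⁻ w : E3 in ball 0 R, ENNReal.ofReal (‖w‖ ^ γ * f (v₀ - w))) +
          ∫⁻ w : E3 in (ball (0 : E3) R)ᶜ, ENNReal.ofReal (‖w‖ ^ γ * f (v₀ - w)) := hsplit.symm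
    _ ≤ ENNReal.ofReal (c₁.toReal * (K * Real.exp (-μ * ‖v₀‖ ^ 2 / 4) * ‖v₀‖ ^ (γ + 3))) +
          ENNReal.ofReal (8 * (M₀ * ‖v₀‖ ^ γ)) := add_le_add hnear hfar
    _ = ENNReal.ofReal (c₁.toReal * (K * Real.exp (-μ * ‖v₀‖ ^ 2 / 4) * ‖v₀‖ ^ (γ + 3)) +
          8 * (M₀ * ‖v₀‖ ^ γ)) := (ENNReal.ofReal_add (by positivity) (by positivity)).symm
    _ ≤ ENNReal.ofReal ((c₁.toReal + 9) * (K * Real.exp (-μ * ‖v₀‖ ^ 2 / 4) * ‖v₀‖ ^ (γ + 3)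
          + M₀ * ‖v₀‖ ^ γ)) := by
        refine ENNReal.ofReal_le_ofReal ?_
        have ha : 0 ≤ K * Real.exp (-μ * ‖v₀‖ ^ 2 / 4) * ‖v₀‖ ^ (γ + 3) := by positivity
        have hb : 0 ≤ M₀ * ‖v₀‖ ^ γ := by positivity
        nlinarith [hc₁0, ha, hb]
end
end
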